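/- Let π be an n-profile with g₂ > g₁ (positive gap), where g₁, g₂ are the facility locations of mechanism M₂. For each i define f₂(i) = max(0, min(g₂, πᵢ) − g₁)/(g₂ − g₁) and f₁(i) = 1 − f₂(i), and W_ℓ = Σᵢ f_ℓ(i). Let S_ℓ be the set of agents served by facility ℓ in the lexicographically first optimal 1-D solution. Then W_ℓ ≥ |S_ℓ|/2 for ℓ ∈ {1,2}. -/

import Mathlib

/-!
Each optimal location σₗ minimises the total distance to the agents of Sₗ, so it is a median
of them: at least half of S₁ lies at or left of σ₁ and at least half of S₂ at or right of σ₂.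
Since σ₁ ≤ g₁ and g₂ ≤ σ₂, all those agents put their whole weight on their own facility,
which gives W_ℓ ≥ |S_ℓ|/2.

For σ₁ ≤ g₁ = min(h₁, mean), look at the left deficit c ↦ ∑ max(0, c − πᵢ): it is at most OPT
at σ₁, equal to OPT at h₁ and strictly increasing beyond π₁, so σ₁ ≤ h₁. Deficit minus surplus
∑ max(0, πᵢ − c) equals n (c − mean), and the surplus is OPT at h₂, so the smaller of σ₁ and h₂
lies left of the mean; together with g₁ < g₂ this forces σ₁ ≤ mean or g₁ = h₁.
The bound g₂ ≤ σ₂ is the mirror image under π ↦ −π.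
-/

open scoped Classical

noncomputable def cost1 {n : ℕ} (π : Fin n → ℝ) (a b : ℝ) : ℝ :=
  ∑ i, min |π i - a| |π i - b|

def lexLE (p q : ℝ × ℝ) : Prop := p.1 < q.1 ∨ (p.1 = q.1 ∧ p.2 ≤ q.2)

def LexOpt {n : ℕ} (π : Fin n → ℝ) (σ : ℝ × ℝ) : Prop :=
  σ.1 ≤ σ.2 ∧ (∀ a b : ℝ, a ≤ b → cost1 π σ.1 σ.2 ≤ cost1 π a b) ∧
  (∀ a b : ℝ, a ≤ b → cost1 π a b = cost1 π σ.1 σ.2 → lexLE σ (a, b))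

/-- fractional weight of agent i toward the right facility -/
noncomputable def frac2 {n : ℕ} (π : Fin n → ℝ) (g1 g2 : ℝ) (i : Fin n) : ℝ :=
  max 0 (min g2 (π i) - g1) / (g2 - g1)

open Finset

section PosPartSums

variable {ι : Type*} [Fintype ι] (x : ι → ℝ)

theorem sum_max_zero_sub_sub_sum_max_zero_sub (c : ℝ) :
    ∑ i, max 0 (c - x i) - ∑ i, max 0 (x i - c) = Fintype.card ι * c - ∑ i, x i := by
  rw [← sum_sub_distrib]
  simp_rw [max_comm (0 : ℝ), ← neg_sub c, max_zero_sub_eq_self, sum_sub_distrib, sum_const,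
    card_univ, nsmul_eq_mul]

theorem card_mul_le_sum_of_sum_max_zero_sub_le {c : ℝ}
    (h : ∑ i, max 0 (c - x i) ≤ ∑ i, max 0 (x i - c)) : Fintype.card ι * c ≤ ∑ i, x i := by
  linarith [sum_max_zero_sub_sub_sum_max_zero_sub x c]

theorem sum_max_zero_sub_lt_of_le {a b : ℝ} (hab : a < b) {j : ι} (hj : x j ≤ a) :
    ∑ i, max 0 (a - x i) < ∑ i, max 0 (b - x i) := by
  refine sum_lt_sum (fun i _ => by gcongr) ⟨j, mem_univ j, ?_⟩
  rw [max_eq_right (by linarith), max_eq_right (by linarith)]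
  linarith

variable {x} {s h₁ h₂ μ C : ℝ}

theorem le_min_of_sum_max_zero_sub (hμ : Fintype.card ι * μ = ∑ i, x i)
    (hs : ∑ i, max 0 (s - x i) ≤ C) (hx : ∃ j, x j ≤ h₁)
    (hh₁ : ∑ i, max 0 (h₁ - x i) = C) (hh₂ : ∑ i, max 0 (x i - h₂) = C)
    (hgap : min h₁ μ < max h₂ μ) : s ≤ min h₁ μ := by
  obtain ⟨j, hj⟩ := hx
  have hcard : (0 : ℝ) < Fintype.card ι := by exact_mod_cast Fintype.card_pos_iff.mpr ⟨j⟩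
  have hsh₁ : s ≤ h₁ := by
    by_contra! h
    linarith [sum_max_zero_sub_lt_of_le x h hj]
  rcases le_total s h₂ with h | h
  · have : ∑ i, max 0 (x i - h₂) ≤ ∑ i, max 0 (x i - s) := by gcongr
    have := card_mul_le_sum_of_sum_max_zero_sub_le x (c := s) (by linarith)
    exact le_min hsh₁ (le_of_mul_le_mul_left (by linarith) hcard)
  · have : ∑ i, max 0 (h₂ - x i) ≤ ∑ i, max 0 (s - x i) := by gcongr
    have := card_mul_le_sum_of_sum_max_zero_sub_le x (c := h₂) (by linarith)
    have hh₂μ : h₂ ≤ μ := le_of_mul_le_mul_left (by linarith) hcard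
    rw [max_eq_right hh₂μ, min_lt_iff] at hgap
    rw [min_eq_left (hgap.resolve_right (lt_irrefl μ)).le]
    exact hsh₁

theorem max_le_of_sum_max_zero_sub (hμ : Fintype.card ι * μ = ∑ i, x i)
    (hs : ∑ i, max 0 (x i - s) ≤ C) (hx : ∃ j, h₂ ≤ x j)
    (hh₁ : ∑ i, max 0 (h₁ - x i) = C) (hh₂ : ∑ i, max 0 (x i - h₂) = C)
    (hgap : min h₁ μ < max h₂ μ) : max h₂ μ ≤ s := by
  have := le_min_of_sum_max_zero_sub (x := -x) (s := -s) (h₁ := -h₂) (h₂ := -h₁) (μ := -μ) (C := C)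
    (by simp [hμ]) (by simpa only [Pi.neg_apply, neg_sub_neg] using hs) (by simpa using hx)
    (by simpa only [Pi.neg_apply, neg_sub_neg] using hh₂)
    (by simpa only [Pi.neg_apply, neg_sub_neg] using hh₁)
    (by rw [min_neg_neg, max_neg_neg]; linarith)
  rw [min_neg_neg] at this
  linarith

end PosPartSums

theorem card_le_two_mul_card_filter_le_of_minimizes {ι : Type*} (S : Finset ι) (x : ι → ℝ)
    {s : ℝ} (hs : ∀ a, ∑ i ∈ S, |x i - s| ≤ ∑ i ∈ S, |x i - a|) :
    #S ≤ 2 * #{i ∈ S | x i ≤ s} := by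
  by_contra! h
  have hsplit := card_filter_add_card_filter_not (s := S) (fun i => x i ≤ s)
  obtain ⟨k, hk, hmin⟩ := exists_min_image {i ∈ S | ¬x i ≤ s} x (card_pos.mp (by omega))
  have hε : 0 < x k - s := by linarith [not_le.mp (mem_filter.mp hk).2]
  have hmove : ∀ i ∈ S, |x i - x k| ≤ |x i - s| + if x i ≤ s then x k - s else -(x k - s) := by
    intro i hi
    split_ifs with hi'
    · linarith [abs_sub_le (x i) s (x k), abs_of_pos hε, abs_sub_comm s (x k)]
    · have := hmin i (mem_filter.mpr ⟨hi, hi'⟩)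
      rw [abs_of_nonneg (by linarith), abs_of_nonneg (by linarith)]
      linarith
  have hsum := sum_le_sum hmove
  rw [sum_add_distrib, sum_ite, sum_const, sum_const, nsmul_eq_mul, nsmul_eq_mul] at hsum
  have hcard : (#{i ∈ S | x i ≤ s} : ℝ) < #{i ∈ S | ¬x i ≤ s} := by exact_mod_cast (by omega)
  nlinarith [hs (x k)]

theorem card_le_two_mul_card_filter_ge_of_minimizes {ι : Type*} (S : Finset ι) (x : ι → ℝ)
    {s : ℝ} (hs : ∀ a, ∑ i ∈ S, |x i - s| ≤ ∑ i ∈ S, |x i - a|) :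
    #S ≤ 2 * #{i ∈ S | s ≤ x i} := by
  simpa only [Pi.neg_apply, neg_le_neg_iff] using
    card_le_two_mul_card_filter_le_of_minimizes S (-x) (s := -s)
      fun a => by simpa only [Pi.neg_apply, ← abs_neg (-x _ - _), neg_sub', neg_neg] using hs (-a)

theorem card_filter_le_sum {ι : Type*} [Fintype ι] (S : Finset ι) (p : ι → Prop)
    [DecidablePred p] {w : ι → ℝ} (hw₀ : ∀ i, 0 ≤ w i) (hw₁ : ∀ i, p i → w i = 1) :
    (#{i ∈ S | p i} : ℝ) ≤ ∑ i, w i := by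
  rw [natCast_card_filter]
  refine (sum_le_sum_of_subset_of_nonneg (subset_univ S) fun i _ _ => ?_).trans
    (sum_le_sum fun i _ => ?_)
  · positivity
  · split_ifs with hi
    exacts [(hw₁ i hi).ge, hw₀ i]

section Cost

variable {n : ℕ} (π : Fin n → ℝ)

theorem cost1_comm (a b : ℝ) : cost1 π a b = cost1 π b a := by
  simp only [cost1, min_comm]

theorem cost1_eq_sum_ite (a b : ℝ) :
    cost1 π a b = ∑ i, if |π i - a| ≤ |π i - b| then |π i - a| else |π i - b| := by
  simp only [cost1, min_def]

theorem cost1_le_sum_ite (a b : ℝ) (p : Fin n → Prop) [DecidablePred p] :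
    cost1 π a b ≤ ∑ i, if p i then |π i - a| else |π i - b| :=
  sum_le_sum fun i _ => by split_ifs; exacts [min_le_left _ _, min_le_right _ _]

theorem sum_max_zero_fst_sub_le_cost1 {a b : ℝ} (hab : a ≤ b) :
    ∑ i, max 0 (a - π i) ≤ cost1 π a b :=
  sum_le_sum fun i _ => le_min (max_le (abs_nonneg _) (by linarith [neg_le_abs (π i - a)]))
    (max_le (abs_nonneg _) (by linarith [neg_le_abs (π i - b)]))

theorem sum_max_zero_sub_snd_le_cost1 {a b : ℝ} (hab : a ≤ b) :
    ∑ i, max 0 (π i - b) ≤ cost1 π a b :=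
  sum_le_sum fun i _ => le_min (max_le (abs_nonneg _) (by linarith [le_abs_self (π i - a)]))
    (max_le (abs_nonneg _) (le_abs_self _))

variable {π} {σ : ℝ × ℝ}

theorem LexOpt.cost1_le (hσ : LexOpt π σ) (a b : ℝ) : cost1 π σ.1 σ.2 ≤ cost1 π a b := by
  rcases le_total a b with h | h
  · exact hσ.2.1 a b h
  · rw [cost1_comm π a]
    exact hσ.2.1 b a h

theorem LexOpt.sum_abs_sub_fst_le (hσ : LexOpt π σ) (a : ℝ) :
    ∑ i ∈ {i | |π i - σ.1| ≤ |π i - σ.2|}, |π i - σ.1| ≤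
      ∑ i ∈ {i | |π i - σ.1| ≤ |π i - σ.2|}, |π i - a| := by
  have h := ((cost1_eq_sum_ite π σ.1 σ.2).symm.trans_le (hσ.cost1_le a σ.2)).trans
    (cost1_le_sum_ite π a σ.2 fun i => |π i - σ.1| ≤ |π i - σ.2|)
  rw [sum_ite, sum_ite] at h
  linarith

theorem LexOpt.sum_abs_sub_snd_le (hσ : LexOpt π σ) (a : ℝ) :
    ∑ i ∈ {i | ¬|π i - σ.1| ≤ |π i - σ.2|}, |π i - σ.2| ≤
      ∑ i ∈ {i | ¬|π i - σ.1| ≤ |π i - σ.2|}, |π i - a| := by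
  have h := ((cost1_eq_sum_ite π σ.1 σ.2).symm.trans_le (hσ.cost1_le σ.1 a)).trans
    (cost1_le_sum_ite π σ.1 a fun i => |π i - σ.1| ≤ |π i - σ.2|)
  rw [sum_ite, sum_ite] at h
  linarith

end Cost

section Frac2

variable {n : ℕ} (π : Fin n → ℝ) {g1 g2 : ℝ} (i : Fin n)

theorem frac2_nonneg (h : g1 ≤ g2) : 0 ≤ frac2 π g1 g2 i :=
  div_nonneg (le_max_left _ _) (sub_nonneg.mpr h)

theorem frac2_le_one (h : g1 < g2) : frac2 π g1 g2 i ≤ 1 := by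
  rw [frac2, div_le_one (sub_pos.mpr h)]
  exact max_le (by linarith) (by linarith [min_le_left g2 (π i)])

variable {π i}

theorem frac2_eq_zero_of_le (h : π i ≤ g1) : frac2 π g1 g2 i = 0 := by
  rw [frac2, max_eq_left (by linarith [min_le_right g2 (π i)]), zero_div]

theorem frac2_eq_one_of_le (hg : g1 < g2) (h : g2 ≤ π i) : frac2 π g1 g2 i = 1 := by
  rw [frac2, min_eq_left h, max_eq_right (by linarith), div_self (sub_pos.mpr hg).ne']

end Frac2

theorem stmt9 {n : ℕ} (hn : 2 ≤ n) (π : Fin n → ℝ) (C : ℝ)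
    (hC : IsLeast {c : ℝ | ∃ a b : ℝ, a ≤ b ∧ cost1 π a b = c} C)
    (h1 h2 : ℝ)
    (hh1 : π ⟨0, by omega⟩ ≤ h1 ∧ (∑ i, max 0 (h1 - π i)) = C)
    (hh2 : h2 ≤ π ⟨n - 1, by omega⟩ ∧ (∑ i, max 0 (π i - h2)) = C)
    (g1 g2 : ℝ) (hg1 : g1 = min h1 ((∑ i, π i) / n)) (hg2 : g2 = max h2 ((∑ i, π i) / n))
    (hgap : g1 < g2)
    (σ : ℝ × ℝ) (hσ : LexOpt π σ) :
    (∑ i, (1 - frac2 π g1 g2 i)) ≥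
      ((Finset.univ.filter (fun i : Fin n => |π i - σ.1| ≤ |π i - σ.2|)).card : ℝ) / 2 ∧
    (∑ i, frac2 π g1 g2 i) ≥
      ((n - (Finset.univ.filter (fun i : Fin n => |π i - σ.1| ≤ |π i - σ.2|)).card : ℕ) : ℝ) / 2 := by
  have hcost : cost1 π σ.1 σ.2 ≤ C := by
    obtain ⟨a, b, -, rfl⟩ := hC.1
    exact hσ.cost1_le a b
  have hmean : (Fintype.card (Fin n) : ℝ) * ((∑ i, π i) / n) = ∑ i, π i := by
    rw [Fintype.card_fin]
    field_simp [show (n : ℝ) ≠ 0 from Nat.cast_ne_zero.mpr (by omega)]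
  subst hg1 hg2
  have hσg1 := le_min_of_sum_max_zero_sub hmean
    ((sum_max_zero_fst_sub_le_cost1 π hσ.1).trans hcost) ⟨_, hh1.1⟩ hh1.2 hh2.2 hgap
  have hg2σ := max_le_of_sum_max_zero_sub hmean
    ((sum_max_zero_sub_snd_le_cost1 π hσ.1).trans hcost) ⟨_, hh2.1⟩ hh1.2 hh2.2 hgap
  constructor
  · have hmed := card_le_two_mul_card_filter_le_of_minimizes _ π hσ.sum_abs_sub_fst_le
    have hW := card_filter_le_sum {i | |π i - σ.1| ≤ |π i - σ.2|} (fun i => π i ≤ σ.1)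
      (fun i => sub_nonneg.mpr (frac2_le_one π i hgap))
      fun i hi => by rw [frac2_eq_zero_of_le (hi.trans hσg1), sub_zero]
    have hmed' := (Nat.cast_le (α := ℝ)).mpr hmed
    push_cast at hmed'
    linarith
  · have hmed := card_le_two_mul_card_filter_ge_of_minimizes _ π hσ.sum_abs_sub_snd_le
    have hW := card_filter_le_sum {i | ¬|π i - σ.1| ≤ |π i - σ.2|} (fun i => σ.2 ≤ π i)
      (fun i => frac2_nonneg π i hgap.le) fun i hi => frac2_eq_one_of_le hgap (hg2σ.trans hi)
    have hsplit := card_filter_add_card_filter_not (s := univ) fun i => |π i - σ.1| ≤ |π i - σ.2|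
    rw [card_univ, Fintype.card_fin] at hsplit
    have hmed' := (Nat.cast_le (α := ℝ)).mpr (show n - #{i | |π i - σ.1| ≤ |π i - σ.2|} ≤
      2 * #{i ∈ {i | ¬|π i - σ.1| ≤ |π i - σ.2|} | σ.2 ≤ π i} by omega)
    push_cast at hmed'
    linarith
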